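/- Let p, q be coprime integers with q ≥ 1, and let δ = (1 − (−1)^q)/2 ∈ {0,1} be the parity of q (δ = 1 iff q is odd). Then there exist a ∈ ℤ with gcd(a,q) = 1 and b ∈ ℝ such that for every admissible n ∈ {0,…,q−1}, the real number (2πa/q)·(n/(2−δ))² + b − θ_n is an integer multiple of 2π. -/

import Mathlib

/-- The generalized quadratic Gauss sum `G(-p, n, q) = ∑_{k=0}^{q-1} e(( -p k² + n k)/q)`. -/
noncomputable def Gm (p : ℤ) (q : ℕ) (n : ℤ) : ℂ :=
  ∑ k ∈ Finset.range q,
    Complex.exp (2 * Real.pi * Complex.I *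
      ((-(p : ℂ) * (k : ℂ) ^ 2 + (n : ℂ) * (k : ℂ)) / (q : ℂ)))

/-- `θ_n`, the argument of `G(-p, n, q)`. -/
noncomputable def theta (p : ℤ) (q : ℕ) (n : ℕ) : ℝ := (Gm p q (n : ℤ)).arg

/-- `n` is admissible when `4 ∤ (2n + 2 - q)`. -/
def Adm (q n : ℕ) : Prop := ¬ ((4 : ℤ) ∣ (2 * (n : ℤ) + 2 - (q : ℤ)))

/-- `δ = (1 - (-1)^q)/2`, the parity of `q` (`δ = 1` iff `q` is odd). -/
def par (q : ℕ) : ℤ := (1 - (-1 : ℤ) ^ q) / 2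

/-!
Completing the square: the substitution `k ↦ k + t` gives
`G(-p, n, q) = e((-p t² + n t)/q) · G(-p, n - 2pt, q)`.
For odd `q` take `t ≡ n/(2p)`: every `G(-p, n, q)` is `G(-p, 0, q)` times `e(a n²/q)` with
`a ≡ (4p)⁻¹`. For `q = 2r`, admissibility means `n = r + 2s`; take `t ≡ s/p`:
`G(-p, n, q)` is `G(-p, r, q)` times `e(a s(n - s)/q)` with `a ≡ p⁻¹`, and
`s(n - s) = (n/2)² - (r/2)²`. The base sums do not vanish because
`G(-p, n, q) · G(p, -n, q) = q ∑_{2pd ≡ 0 (q)} e((-p d² + n d)/q)`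
and each term of this sum is `1` at the base points.
-/

open Finset Complex

section QuadGaussSum

variable {R R' : Type*} [CommRing R] [Fintype R] [CommRing R']

def quadGaussSum (ψ : AddChar R R') (a b : R) : R' := ∑ x, ψ (a * x ^ 2 + b * x)

theorem quadGaussSum_eq_mul_quadGaussSum_add (ψ : AddChar R R') (a b t : R) :
    quadGaussSum ψ a b = ψ (a * t ^ 2 + b * t) * quadGaussSum ψ a (b + 2 * a * t) := by
  rw [quadGaussSum, quadGaussSum, mul_sum, ← Equiv.sum_comp (Equiv.addRight t)]
  refine sum_congr rfl fun x _ => ?_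
  rw [← AddChar.map_add_eq_mul, Equiv.coe_addRight]
  ring_nf

theorem quadGaussSum_mul_quadGaussSum_neg [DecidableEq R] [IsDomain R'] {ψ : AddChar R R'}
    (hψ : ψ.IsPrimitive) (a b : R) :
    quadGaussSum ψ a b * quadGaussSum ψ (-a) (-b) =
      Fintype.card R * ∑ d with 2 * a * d = 0, ψ (a * d ^ 2 + b * d) := by
  calc quadGaussSum ψ a b * quadGaussSum ψ (-a) (-b)
      = ∑ d, ψ (a * d ^ 2 + b * d) * ∑ y, ψ (y * (2 * a * d)) := by
        simp_rw [mul_sum]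
        rw [quadGaussSum, quadGaussSum, sum_mul_sum, sum_comm]
        conv_rhs => rw [sum_comm]
        refine sum_congr rfl fun y _ => ?_
        rw [← Equiv.sum_comp (Equiv.addRight y)]
        refine sum_congr rfl fun d _ => ?_
        rw [← AddChar.map_add_eq_mul, ← AddChar.map_add_eq_mul, Equiv.coe_addRight]
        ring_nf
    _ = Fintype.card R * ∑ d with 2 * a * d = 0, ψ (a * d ^ 2 + b * d) := by
        simp_rw [AddChar.sum_mulShift _ hψ, sum_filter, mul_sum]
        refine sum_congr rfl fun d _ => ?_
        split_ifs <;> ring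

theorem quadGaussSum_ne_zero [IsDomain R'] [CharZero R'] {ψ : AddChar R R'} (hψ : ψ.IsPrimitive)
    {a b : R} (h : ∀ d, 2 * a * d = 0 → a * d ^ 2 + b * d = 0) : quadGaussSum ψ a b ≠ 0 := by
  classical
  refine left_ne_zero_of_mul (b := quadGaussSum ψ (-a) (-b)) ?_
  rw [quadGaussSum_mul_quadGaussSum_neg hψ,
    sum_congr rfl fun d hd => by rw [h d (mem_filter.1 hd).2, AddChar.map_zero_eq_one]]
  have : 0 ∈ ({d | 2 * a * d = 0} : Finset R) := by simp
  simp [card_ne_zero_of_mem this]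

end QuadGaussSum

theorem Gm_eq_quadGaussSum (p : ℤ) (q : ℕ) [NeZero q] (n : ℤ) :
    Gm p q n = quadGaussSum ZMod.stdAddChar (-p : ZMod q) n := by
  refine sum_nbij' (↑) ZMod.val (by simp) (fun x _ => mem_range.2 x.val_lt)
    (fun k hk => ZMod.val_cast_of_lt (mem_range.1 hk)) (fun x _ => ZMod.natCast_zmod_val x)
    fun k _ => ?_
  rw [show (-p : ZMod q) * (k : ZMod q) ^ 2 + n * k = ((-p * k ^ 2 + n * k : ℤ) : ZMod q) by
    push_cast; ring, ZMod.stdAddChar_coe]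
  congr 1
  push_cast
  ring

theorem arg_exp_mul_I_mul_coe_angle (θ : ℝ) {z : ℂ} (hz : z ≠ 0) :
    ((exp (θ * I) * z).arg : Real.Angle) = θ + z.arg := by
  rw [arg_mul_coe_angle (exp_ne_zero _) hz, arg_exp_mul_I, Real.Angle.coe_toIocMod]

theorem exists_int_arg_stdAddChar_mul (q : ℕ) [NeZero q] (c : ℤ) {z : ℂ} (hz : z ≠ 0) :
    ∃ m : ℤ, 2 * Real.pi * c / q + z.arg - (ZMod.stdAddChar (c : ZMod q) * z).arg
      = 2 * Real.pi * m := by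
  have h : ((2 * Real.pi * c / q + z.arg - (ZMod.stdAddChar (c : ZMod q) * z).arg : ℝ) :
      Real.Angle) = 0 := by
    rw [Real.Angle.coe_sub, Real.Angle.coe_add, ZMod.stdAddChar_coe,
      show 2 * Real.pi * I * c / q = ((2 * Real.pi * c / q : ℝ) : ℂ) * I by push_cast; ring,
      arg_exp_mul_I_mul_coe_angle _ hz, sub_self]
  obtain ⟨m, hm⟩ := Real.Angle.coe_eq_zero_iff.1 h
  exact ⟨m, by rw [← hm, zsmul_eq_mul]; ring⟩

theorem ZMod.sq_eq_mul_of_two_mul_eq_zero {r : ℕ} {d : ZMod (2 * r)} (hd : 2 * d = 0) :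
    d ^ 2 = r * d := by
  obtain ⟨k, rfl⟩ := ZMod.intCast_surjective d
  have hk : ((2 * r : ℕ) : ℤ) ∣ 2 * k :=
    (ZMod.intCast_zmod_eq_zero_iff_dvd _ _).1 (by exact_mod_cast hd)
  obtain ⟨e, rfl⟩ : (r : ℤ) ∣ k := by
    push_cast at hk; exact (mul_dvd_mul_iff_left two_ne_zero).1 hk
  obtain ⟨j, hj⟩ := Int.even_mul_pred_self e
  rw [← sub_eq_zero]
  have : ((r * e) ^ 2 - r * (r * e) : ℤ) = (2 * r : ℕ) * (r * j) := by
    push_cast; linear_combination (r : ℤ) ^ 2 * hj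
  exact_mod_cast (ZMod.intCast_zmod_eq_zero_iff_dvd _ _).2 ⟨_, this⟩

theorem odd_of_isCoprime_two_mul {p : ℤ} {r : ℕ} (h : IsCoprime p (2 * r : ℕ)) : Odd p := by
  obtain ⟨u, c, huc⟩ := h
  by_contra hp
  obtain ⟨k, rfl⟩ := Int.not_odd_iff_even.1 hp
  have : (2 : ℤ) ∣ 1 := ⟨u * k + c * r, by push_cast at huc; linear_combination -huc⟩
  omega

theorem Gm_ne_zero_of_odd {p : ℤ} {q : ℕ} [NeZero q] (hpq : IsCoprime (2 * p) q) (n : ℤ) :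
    Gm p q n ≠ 0 := by
  obtain ⟨u, c, huc⟩ := hpq
  have hu : (u : ZMod q) * (2 * p) = 1 := by simpa using congrArg (Int.cast : ℤ → ZMod q) huc
  rw [Gm_eq_quadGaussSum]
  exact quadGaussSum_ne_zero (ZMod.isPrimitive_stdAddChar q) fun d hd => by
    linear_combination (-p * d + n) * (-u) * hd - (-p * d + n) * d * hu

theorem Gm_ne_zero_of_even {p : ℤ} {q r : ℕ} [NeZero q] (hq : q = 2 * r) (hpq : IsCoprime p q)
    {n : ℤ} (hn : 2 ∣ n - r) : Gm p q n ≠ 0 := by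
  obtain ⟨k, rfl⟩ := odd_of_isCoprime_two_mul (hq ▸ hpq)
  obtain ⟨u, c, huc⟩ := hpq
  have hu : (u : ZMod q) * (2 * k + 1) = 1 := by
    simpa using congrArg (Int.cast : ℤ → ZMod q) huc
  subst hq
  obtain ⟨j, hj⟩ := hn
  have hn : (n : ZMod (2 * r)) = r + 2 * j := by
    rw [← sub_eq_iff_eq_add']; exact_mod_cast congrArg (Int.cast : ℤ → ZMod (2 * r)) hj
  rw [Gm_eq_quadGaussSum]
  refine quadGaussSum_ne_zero (ZMod.isPrimitive_stdAddChar _) fun d hd => ?_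
  push_cast at hd
  have h2 : 2 * d = 0 := by linear_combination (-u) * hd - 2 * d * hu
  push_cast
  -- `2d = 0` gives `p d² = d²`, `n d = r d` and `d² = r d`
  linear_combination (-(k * d) + j) * h2 - ZMod.sq_eq_mul_of_two_mul_eq_zero h2 + d * hn

theorem exists_quadratic_phase_of_odd (p : ℤ) (q : ℕ) [NeZero q] (hpq : IsCoprime (2 * p) q) :
    ∃ a : ℤ, IsCoprime a q ∧ ∀ n : ℕ, ∃ m : ℤ,
      2 * Real.pi * a / q * n ^ 2 + theta p q 0 - theta p q n = 2 * Real.pi * m := by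
  obtain ⟨u, c, huc⟩ := hpq
  have hu : (u : ZMod q) * (2 * p) = 1 := by simpa using congrArg (Int.cast : ℤ → ZMod q) huc
  have ha : IsCoprime (u - p * u ^ 2) q :=
    ⟨4 * p, q * c ^ 2, by linear_combination (c * q - 2 * p * u + 1) * huc⟩
  refine ⟨u - p * u ^ 2, ha, fun n => ?_⟩
  have hG : Gm p q n = ZMod.stdAddChar (((u - p * u ^ 2) * n ^ 2 : ℤ) : ZMod q) * Gm p q 0 := by
    rw [Gm_eq_quadGaussSum, Gm_eq_quadGaussSum,
      quadGaussSum_eq_mul_quadGaussSum_add _ _ _ ((u * n : ℤ) : ZMod q)]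
    push_cast
    congr 2
    · ring
    · linear_combination -(n : ZMod q) * hu
  obtain ⟨m, hm⟩ := exists_int_arg_stdAddChar_mul q ((u - p * u ^ 2) * n ^ 2)
    (Gm_ne_zero_of_odd ⟨u, c, huc⟩ 0)
  refine ⟨m, ?_⟩
  rw [theta, theta, hG, Nat.cast_zero]
  push_cast at hm ⊢
  linear_combination hm

theorem exists_quadratic_phase_of_even (p : ℤ) (q r : ℕ) [NeZero q] (hq : q = 2 * r)
    (hpq : IsCoprime p q) :
    ∃ (a : ℤ) (b : ℝ), IsCoprime a q ∧ ∀ n : ℕ, (2 : ℤ) ∣ n - r → ∃ m : ℤ,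
      2 * Real.pi * a / q * (n / 2) ^ 2 + b - theta p q n = 2 * Real.pi * m := by
  obtain ⟨u, c, huc⟩ := hpq
  have hu : (u : ZMod q) * p = 1 := by simpa using congrArg (Int.cast : ℤ → ZMod q) huc
  refine ⟨u, theta p q r - 2 * Real.pi * u / q * (r / 2) ^ 2,
    ⟨p, c, by linear_combination huc⟩, fun n hn => ?_⟩
  obtain ⟨s, hs⟩ := hn
  have hG : Gm p q n = ZMod.stdAddChar ((u * s * (n - s) : ℤ) : ZMod q) * Gm p q r := by
    rw [Gm_eq_quadGaussSum, Gm_eq_quadGaussSum,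
      quadGaussSum_eq_mul_quadGaussSum_add _ _ _ ((u * s : ℤ) : ZMod q)]
    have hnq : ((n : ℤ) : ZMod q) = r + 2 * s := by
      rw [← sub_eq_iff_eq_add']; exact_mod_cast congrArg (Int.cast : ℤ → ZMod q) hs
    push_cast at hnq ⊢
    congr 2
    · linear_combination (-(u * s ^ 2 : ZMod q)) * hu
    · linear_combination hnq - 2 * (s : ZMod q) * hu
  obtain ⟨m, hm⟩ := exists_int_arg_stdAddChar_mul q (u * s * (n - s))
    (Gm_ne_zero_of_even (n := r) hq ⟨u, c, huc⟩ (by simp))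
  refine ⟨m, ?_⟩
  have hsR : (n : ℝ) - r = 2 * s := by exact_mod_cast hs
  rw [theta, theta, hG, show (r : ℝ) = n - 2 * s by linarith]
  push_cast at hm ⊢
  linear_combination hm

theorem stmt5 (p : ℤ) (q : ℕ) (hq : 1 ≤ q) (hpq : Int.gcd p (q : ℤ) = 1) :
    ∃ (a : ℤ) (b : ℝ), Int.gcd a (q : ℤ) = 1 ∧
      ∀ n : ℕ, n < q → Adm q n →
        ∃ m : ℤ,
          (2 * Real.pi * (a : ℝ) / (q : ℝ)) * ((n : ℝ) / (2 - (par q : ℝ))) ^ 2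
            + b - theta p q n = 2 * Real.pi * (m : ℝ) := by
  have : NeZero q := ⟨by omega⟩
  rw [← Int.isCoprime_iff_gcd_eq_one] at hpq
  simp_rw [← Int.isCoprime_iff_gcd_eq_one]
  rcases Nat.even_or_odd' q with ⟨r, hr | hr⟩
  · obtain ⟨a, b, ha, h⟩ := exists_quadratic_phase_of_even p q r hr hpq
    have hpar : par q = 0 := by rw [par, hr, pow_mul]; norm_num
    refine ⟨a, b, ha, fun n _ hn => ?_⟩
    rw [hpar, Int.cast_zero, sub_zero]
    exact h n (by rw [Adm] at hn; omega)
  · have h2q : IsCoprime (2 : ℤ) q := by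
      exact_mod_cast Nat.isCoprime_iff_coprime.2 (Nat.coprime_two_left.2 ⟨r, hr⟩)
    obtain ⟨a, ha, h⟩ := exists_quadratic_phase_of_odd p q (h2q.mul_left hpq)
    have hpar : par q = 1 := by rw [par, hr, pow_succ, pow_mul]; norm_num
    refine ⟨a, theta p q 0, ha, fun n _ _ => ?_⟩
    rw [hpar, Int.cast_one, show (2 : ℝ) - 1 = 1 by norm_num, div_one]
    exact h n
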